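/- For real x₁, x₂ and t, s with |t| small enough that all factors are nonzero: (1/2)·[(1−ztx₁)^{−1−κ}(1−ztx₂)^{−κ}(1−z⁻¹tx₂)^{−1−κ}(1−z⁻¹tx₁)^{−κ} + (1−ztx₂)^{−1−κ}(1−ztx₁)^{−κ}(1−z⁻¹tx₁)^{−1−κ}(1−z⁻¹tx₂)^{−κ}] = (1 − (x₁+x₂)st + x₁x₂t²) / ((1−2stx₁+x₁²t²)(1−2stx₂+x₂²t²))^{κ+1}, where s = (z+z⁻¹)/2 and z is a nonzero complex number of modulus one (so s = cos θ). -/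

import Mathlib

/-!
Put `a = 1 - z t x₁` and `b = 1 - z t x₂`. Since `z⁻¹ = z̄`, the other two factors are `ā` and `b̄`.
Off the negative real axis `log ā = conj (log a)`, so `a ^ w * ā ^ w = |a|² ^ w`; after splitting
`-1 - κ = -1 + (-κ)` the left side becomes
`½ (1/(a b̄) + 1/(b ā)) · (|a|² |b|²) ^ (-κ) = Re (a b̄) / (|a|² |b|²) ^ (κ + 1)`.
With `|z| = 1` and `Re z = s`, `|a|²`, `|b|²` and `Re (a b̄)` are the real polynomials on the right.
-/

open Complex ComplexConjugate

namespace Complex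

theorem cpow_mul_conj_cpow {a : ℂ} (ha : a ∈ slitPlane) (w : ℂ) :
    a ^ w * conj a ^ w = (normSq a : ℂ) ^ w := by
  have ha0 := slitPlane_ne_zero ha
  have hnorm : log (normSq a : ℂ) = log a + conj (log a) := by
    rw [add_conj, log_re, ← ofReal_log (normSq_nonneg a), normSq_eq_norm_sq, Real.log_pow]
    push_cast; ring
  rw [cpow_def_of_ne_zero ha0, cpow_def_of_ne_zero ((map_ne_zero conj).2 ha0),
    cpow_def_of_ne_zero (by simpa using ha0), ← exp_add, log_conj _ (slitPlane_arg_ne_pi ha),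
    hnorm, add_mul]

theorem one_sub_mem_slitPlane {v : ℂ} (hv : ‖v‖ < 1) : 1 - v ∈ slitPlane := by
  simpa [sub_eq_add_neg] using mem_slitPlane_of_norm_lt_one (z := -v) (by simpa using hv)

theorem cpow_neg_one_sub {a : ℂ} (ha : a ≠ 0) (κ : ℝ) :
    a ^ (-1 - κ : ℂ) = a⁻¹ * a ^ (-κ : ℂ) := by
  rw [sub_eq_add_neg, cpow_add _ _ ha, cpow_neg_one]

theorem half_mul_inv_add_inv_conj {a b : ℂ} (ha : a ≠ 0) (hb : b ≠ 0) :
    (1 / 2 : ℂ) * (a⁻¹ * (conj b)⁻¹ + b⁻¹ * (conj a)⁻¹) =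
      ((a * conj b).re : ℂ) / ((normSq a * normSq b : ℝ) : ℂ) := by
  have hre : 2 * ((a * conj b).re : ℂ) = a * conj b + b * conj a := by
    rw [show b * conj a = conj (a * conj b) by simp [mul_comm], add_conj]; push_cast; ring
  rw [ofReal_mul, ← mul_conj, ← mul_conj]
  have : conj a ≠ 0 := (map_ne_zero conj).2 ha
  have : conj b ≠ 0 := (map_ne_zero conj).2 hb
  field_simp
  linear_combination -hre

theorem half_sum_cpow_mul_conj_cpow {a b : ℂ} (ha : a ∈ slitPlane) (hb : b ∈ slitPlane) (κ : ℝ) :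
    (1 / 2 : ℂ) *
        (a ^ (-1 - κ : ℂ) * b ^ (-κ : ℂ) * conj b ^ (-1 - κ : ℂ) * conj a ^ (-κ : ℂ) +
          b ^ (-1 - κ : ℂ) * a ^ (-κ : ℂ) * conj a ^ (-1 - κ : ℂ) * conj b ^ (-κ : ℂ)) =
      ((a * conj b).re : ℂ) / ((normSq a * normSq b : ℝ) : ℂ) ^ ((κ : ℂ) + 1) := by
  have ha0 := slitPlane_ne_zero ha
  have hb0 := slitPlane_ne_zero hb
  have hN : 0 < normSq a * normSq b := mul_pos (normSq_pos.2 ha0) (normSq_pos.2 hb0)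
  have hN0 : ((normSq a * normSq b : ℝ) : ℂ) ≠ 0 := ofReal_ne_zero.2 hN.ne'
  rw [cpow_neg_one_sub ha0, cpow_neg_one_sub hb0, cpow_neg_one_sub ((map_ne_zero conj).2 ha0),
    cpow_neg_one_sub ((map_ne_zero conj).2 hb0)]
  calc _ = (1 / 2 : ℂ) * (a⁻¹ * (conj b)⁻¹ + b⁻¹ * (conj a)⁻¹) *
        ((a ^ (-κ : ℂ) * conj a ^ (-κ : ℂ)) * (b ^ (-κ : ℂ) * conj b ^ (-κ : ℂ))) := by ring
    _ = ((a * conj b).re : ℂ) / ((normSq a * normSq b : ℝ) : ℂ) *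
        ((normSq a * normSq b : ℝ) : ℂ) ^ (-κ : ℂ) := by
      rw [half_mul_inv_add_inv_conj ha0 hb0, cpow_mul_conj_cpow ha, cpow_mul_conj_cpow hb,
        ofReal_mul, mul_cpow_ofReal_nonneg (normSq_nonneg a) (normSq_nonneg b)]
    _ = _ := by
      have : ((normSq a * normSq b : ℝ) : ℂ) ^ (κ : ℂ) ≠ 0 := by
        simp [cpow_eq_zero_iff, ha0, hb0]
      rw [cpow_add _ _ hN0, cpow_one, cpow_neg]
      field_simp

theorem normSq_one_sub_mul_mul (z : ℂ) (t x : ℝ) :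
    normSq (1 - z * t * x) = 1 - 2 * z.re * t * x + x ^ 2 * t ^ 2 * normSq z := by
  simp [normSq_apply]; ring

theorem re_one_sub_mul_mul_mul_conj (z : ℂ) (t x y : ℝ) :
    ((1 - z * t * x) * conj (1 - z * t * y)).re =
      1 - (x + y) * z.re * t + x * y * t ^ 2 * normSq z := by
  simp [normSq_apply]; ring

end Complex

/-- The symmetric generating function evaluated at `x = (x₁,x₂,0,…)`:
for `z` on the unit circle with `s = (z+z⁻¹)/2 = cos θ` and `|t|` small,
`½(w₁(x) + w₂(x)) = (1 − (x₁+x₂)st + x₁x₂t²)/((1−2stx₁+x₁²t²)(1−2stx₂+x₂²t²))^{κ+1}`. -/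
theorem u1_eval_closed_form (κ x₁ x₂ t s : ℝ) (z : ℂ)
    (hz : ‖z‖ = 1) (hs : (s : ℂ) = (z + z⁻¹) / 2)
    (h1 : |t| * |x₁| < 1) (h2 : |t| * |x₂| < 1) :
    (1 / 2 : ℂ) *
        ((1 - z * t * x₁) ^ (-1 - κ : ℂ) * (1 - z * t * x₂) ^ (-κ : ℂ) *
            (1 - z⁻¹ * t * x₂) ^ (-1 - κ : ℂ) * (1 - z⁻¹ * t * x₁) ^ (-κ : ℂ) +
          (1 - z * t * x₂) ^ (-1 - κ : ℂ) * (1 - z * t * x₁) ^ (-κ : ℂ) *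
            (1 - z⁻¹ * t * x₁) ^ (-1 - κ : ℂ) * (1 - z⁻¹ * t * x₂) ^ (-κ : ℂ)) =
      ((1 - (x₁ + x₂) * s * t + x₁ * x₂ * t ^ 2 : ℝ) : ℂ) /
        (((1 - 2 * s * t * x₁ + x₁ ^ 2 * t ^ 2) * (1 - 2 * s * t * x₂ + x₂ ^ 2 * t ^ 2) : ℝ) : ℂ) ^
          ((κ : ℂ) + 1) := by
  have hzinv : z⁻¹ = conj z := inv_eq_conj hz
  have hz2 : normSq z = 1 := by rw [normSq_eq_norm_sq, hz, one_pow]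
  have hre : z.re = s := by
    apply ofReal_injective
    rw [hs, hzinv, add_conj]
    push_cast; ring
  have hconj (x : ℝ) : 1 - z⁻¹ * t * x = conj (1 - z * t * x) := by simp [hzinv]
  have hmem (x : ℝ) (hx : |t| * |x| < 1) : 1 - z * t * x ∈ slitPlane :=
    one_sub_mem_slitPlane (by simpa [hz] using hx)
  rw [hconj x₁, hconj x₂, half_sum_cpow_mul_conj_cpow (hmem x₁ h1) (hmem x₂ h2),
    re_one_sub_mul_mul_mul_conj, normSq_one_sub_mul_mul, normSq_one_sub_mul_mul, hz2, hre]
  simp only [mul_one]
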